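/- Every finite chordal graph with at least one vertex contains a simplicial vertex, i.e., a vertex whose neighborhood induces a complete subgraph. -/

import Mathlib

/-!
A clique `K` of a finite chordal graph that does not contain every vertex misses a simplicial
vertex; the theorem is the case `K = ∅`. We argue by induction on the vertex set `s`, a vertex `c`
being simplicial in `G[s]` when `G.neighborSet c ∩ s` is a clique. If `s` is not a clique, choose
`v ∈ s` not adjacent to all of `s` with `K ∩ s ⊆ N[v]`, and let `C` be a connected component of
`s \ N[v]`. The neighbours `S` of `C` in `s` lie in `N(v)`, and `S` is a clique: a chordless path
through `C` joining two non-adjacent vertices of `S` would close up through `v` to a chordless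
cycle of length at least four. By induction the smaller set `C ∪ S` has a simplicial vertex
outside `S`, so in `C`, and it stays simplicial in `G[s]` because every neighbour of `C` lies in
`C ∪ S`.
-/

variable {V : Type*} [Fintype V] [DecidableEq V]

open Finset


/-- `W` dominates the set `A` in `G`: every vertex of `A` is in `W` or adjacent to a vertex of `W`. -/
def Dominates (G : SimpleGraph V) (W A : Finset V) : Prop :=
  ∀ a ∈ A, a ∈ W ∨ ∃ w ∈ W, G.Adj w a

/-- `I` is an independent set of `G`. -/
def IndepSet (G : SimpleGraph V) (I : Finset V) : Prop :=
  ∀ u ∈ I, ∀ v ∈ I, ¬ G.Adj u v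

instance (G : SimpleGraph V) [DecidableRel G.Adj] (I : Finset V) :
    Decidable (IndepSet G I) := by unfold IndepSet; infer_instance

/-- The domination number of `G`. -/
noncomputable def gamma (G : SimpleGraph V) : ℕ :=
  sInf {k | ∃ W : Finset V, W.card = k ∧ Dominates G W Finset.univ}

/-- The independence domination number of `G`. -/
noncomputable def igamma (G : SimpleGraph V) : ℕ :=
  sInf {k | ∀ I : Finset V, IndepSet G I → ∃ W : Finset V, W.card ≤ k ∧ Dominates G W I}

/-- The noncover complex of `G`: faces are the vertex sets whose complement is not independent. -/
def NC (G : SimpleGraph V) [DecidableRel G.Adj] : Finset (Finset V) :=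
  Finset.univ.filter fun W => ¬ IndepSet G Wᶜ

/-- The independence complex of `G`. -/
def IndComplex (G : SimpleGraph V) [DecidableRel G.Adj] : Finset (Finset V) :=
  Finset.univ.filter fun I => IndepSet G I

/-- The combinatorial Alexander dual of a complex on the full vertex set `V`. -/
def AlexDual (K : Finset (Finset V)) : Finset (Finset V) :=
  Finset.univ.filter fun s => sᶜ ∉ K

/-- `K` is a simplicial complex (downward closed family of finite sets). -/
def IsComplex (K : Finset (Finset V)) : Prop :=
  ∀ σ ∈ K, ∀ τ ⊆ σ, τ ∈ K

/-- `s` is a maximal face (facet) of `K`. -/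
def IsMaxFace (K : Finset (Finset V)) (s : Finset V) : Prop :=
  s ∈ K ∧ ∀ t ∈ K, s ⊆ t → t = s

/-- `σ` is a free face of `K`: a face contained in a unique maximal face. -/
def IsFreeFace (K : Finset (Finset V)) (σ : Finset V) : Prop :=
  σ ∈ K ∧ ∃ τ ∈ K, σ ⊆ τ ∧ ∀ ρ ∈ K, σ ⊆ ρ → ρ ⊆ τ

/-- `K'` is obtained from `K` by an elementary `d`-collapse. -/
def ElemCollapse (d : ℕ) (K K' : Finset (Finset V)) : Prop :=
  ∃ σ : Finset V, IsFreeFace K σ ∧ σ.card ≤ d ∧ K' = K.filter fun ρ => ¬ σ ⊆ ρ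

/-- `K` is `d`-collapsible. -/
def Collapsible (d : ℕ) (K : Finset (Finset V)) : Prop :=
  Relation.ReflTransGen (ElemCollapse d) K ∅

/-- chordality -/
def IsChordal (G : SimpleGraph V) : Prop :=
  ∀ (u : V) (c : G.Walk u u), c.IsCycle → 4 ≤ c.length →
    ∃ x ∈ c.support, ∃ y ∈ c.support, G.Adj x y ∧ s(x, y) ∉ c.edges

/-- simplicial vertex -/
def IsSimplicialVtx (G : SimpleGraph V) (v : V) : Prop :=
  ∀ x y : V, G.Adj v x → G.Adj v y → x ≠ y → G.Adj x y

namespace SimpleGraph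

variable {W : Type*} {G : SimpleGraph W}

namespace Walk

lemma mk_start_mem_edges_of_length_eq_dist {u v w : W} {p : G.Walk u v}
    (hp : p.length = G.dist u v) (hw : w ∈ p.support) (hadj : G.Adj u w) : s(u, w) ∈ p.edges := by
  classical
  apply p.edges_takeUntil_subset_edges hw
  have hlen : (p.takeUntil w hw).length = 1 := by
    rw [length_eq_dist_of_subwalk hp (p.isSubwalk_takeUntil hw), dist_eq_one_iff_adj.mpr hadj]
  generalize p.takeUntil w hw = q at hlen
  cases q with
  | nil => simp at hlen
  | cons h q =>
    cases q with
    | nil => simp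
    | cons => simp at hlen

lemma isChordless_of_length_eq_dist {u v : W} (p : G.Walk u v) (hp : p.length = G.dist u v) :
    p.IsChordless := by
  rw [isChordless_iff_forall_mem_edges]
  induction p with
  | nil => simp
  | cons h p ih =>
    have hp' := length_eq_dist_of_subwalk hp (p.isSubwalk_cons h)
    intro a b ha hb hab
    rw [support_cons, List.mem_cons] at ha hb
    rcases ha with rfl | ha
    · exact mk_start_mem_edges_of_length_eq_dist hp (by simp [hb]) hab
    rcases hb with rfl | hb
    · rw [Sym2.eq_swap]
      exact mk_start_mem_edges_of_length_eq_dist hp (by simp [ha]) hab.symm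
    · exact List.mem_cons_of_mem _ (ih hp' ha hb hab)

lemma IsChordless.map {W' : Type*} {G' : SimpleGraph W'} (f : G ↪g G') {u v : W}
    {p : G.Walk u v} (hp : p.IsChordless) : (p.map f.toHom).IsChordless := by
  rw [isChordless_iff_forall_mem_edges] at hp ⊢
  intro a b ha hb hab
  simp only [support_map, List.mem_map] at ha hb
  obtain ⟨a, ha, rfl⟩ := ha
  obtain ⟨b, hb, rfl⟩ := hb
  rw [edges_map]
  exact List.mem_map_of_mem (hp ha hb (f.map_adj_iff.mp hab))

end Walk

lemma connected_induce_singleton (c : W) : (G.induce {c}).Connected :=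
  (connected_iff _).mpr ⟨.of_subsingleton, inferInstance⟩

lemma exists_isChordless_path_of_connected_induce {C : Set W} (hC : (G.induce C).Connected)
    {x y cx cy : W} (hxy : x ≠ y) (hnadj : ¬ G.Adj x y) (hcx : cx ∈ C) (hcy : cy ∈ C)
    (hx : G.Adj x cx) (hy : G.Adj cy y) :
    ∃ p : G.Walk x y, p.IsPath ∧ p.IsChordless ∧ 2 ≤ p.length ∧
      ∀ z ∈ p.support, z = x ∨ z = y ∨ z ∈ C := by
  have hU : (G.induce ({x} ∪ C ∪ {y})).Connected :=
    connected_induce_union (connected_induce_union (connected_induce_singleton x).preconnected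
      hC.preconnected rfl hcx hx).preconnected (connected_induce_singleton y).preconnected
      (Or.inr hcy) rfl hy
  obtain ⟨q, hq, hqlen⟩ := hU.exists_path_of_dist ⟨x, .inl (.inl rfl)⟩ ⟨y, .inr rfl⟩
  have hlen : 1 < q.length := hqlen ▸ hU.one_lt_dist_of_ne_of_not_adj
    (fun h => hxy (congrArg Subtype.val h)) (by simpa using hnadj)
  refine ⟨q.map (Embedding.induce _).toHom, hq.map Subtype.val_injective,
    (q.isChordless_of_length_eq_dist hqlen).map _, hlen.trans_eq (Walk.length_map _ q).symm, ?_⟩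
  intro z hz
  obtain ⟨⟨z, hzU⟩, -, rfl⟩ := List.mem_map.mp (Walk.support_map _ q ▸ hz)
  simp only [Set.mem_union, Set.mem_singleton_iff] at hzU
  tauto

/-- Otherwise the path closed up through `v` would be a chordless cycle of length at least four. -/
theorem _root_.IsChordal.exists_adj_of_isChordless_path (hG : IsChordal G) {v x y : W}
    {p : G.Walk x y} (hp : p.IsPath) (hch : p.IsChordless) (hlen : 2 ≤ p.length)
    (hv : v ∉ p.support) (hvx : G.Adj v x) (hvy : G.Adj v y) : ∃ z ∈ p.support, z ≠ x ∧ z ≠ y ∧ G.Adj v z := by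
  by_contra! hno
  have hxy : x ≠ y := by
    rintro rfl
    rw [(Walk.isPath_iff_nil.mp hp).length_eq_zero] at hlen
    omega
  let c : G.Walk v v := .cons hvx (p.concat hvy.symm)
  have hc : c.IsCycle := by
    refine (Walk.cons_isCycle_iff _ _).mpr ⟨hp.concat hv _, ?_⟩
    rw [Walk.edges_concat, List.concat_eq_append, List.mem_append]
    rintro (h | h)
    · exact hv (p.fst_mem_support_of_mem_edges h)
    · simp only [List.mem_singleton, Sym2.eq, Sym2.rel_iff'] at h
      grind
  obtain ⟨a, ha, b, hb, hab, hne⟩ := hG v c hc (by simp [c]; omega)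
  have hsupp : ∀ z ∈ c.support, z ≠ v → z ∈ p.support := by
    simp only [c, Walk.support_cons, Walk.support_concat, List.mem_cons, List.mem_append]
    tauto
  have hedges : s(v, x) ∈ c.edges ∧ s(v, y) ∈ c.edges ∧ ∀ e ∈ p.edges, e ∈ c.edges := by
    simp +contextual [c, Sym2.eq_swap]
  have hvz : ∀ z ∈ c.support, G.Adj v z → s(v, z) ∈ c.edges := by
    intro z hz hvz
    obtain rfl | rfl : z = x ∨ z = y := by
      by_contra! h
      exact hno z (hsupp z hz hvz.ne') h.1 h.2 hvz
    exacts [hedges.1, hedges.2.1]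
  apply hne
  by_cases hav : a = v
  · subst hav
    exact hvz b hb hab
  by_cases hbv : b = v
  · subst hbv
    exact Sym2.eq_swap ▸ hvz a ha hab.symm
  exact hedges.2.2 _ (hch.mem_edges (hsupp a ha hav) (hsupp b hb hbv) hab)

lemma mem_of_maximal_connected_induce {T C : Set W}
    (hC : Maximal (fun D => D ⊆ T ∧ (G.induce D).Connected) C) {c z : W} (hc : c ∈ C)
    (hz : z ∈ T) (hcz : G.Adj c z) : z ∈ C := by
  have hCz : C ∪ {z} ⊆ T ∧ (G.induce (C ∪ {z})).Connected :=
    ⟨Set.union_subset hC.1.1 (Set.singleton_subset_iff.mpr hz), connected_induce_union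
      hC.1.2.preconnected (connected_induce_singleton z).preconnected hc rfl hcz⟩
  exact hC.2 hCz Set.subset_union_left (Or.inr rfl)

lemma exists_inter_subset_insert_neighborSet_of_not_isClique {s K : Set W} (hs : ¬ G.IsClique s)
    (hK : G.IsClique K) :
    ∃ v ∈ s, K ∩ s ⊆ insert v (G.neighborSet v) ∧ ¬ s ⊆ insert v (G.neighborSet v) := by
  by_cases h : ∃ v ∈ K ∩ s, ¬ s ⊆ insert v (G.neighborSet v)
  · obtain ⟨v, ⟨hvK, hvs⟩, hsv⟩ := h
    refine ⟨v, hvs, fun k hk => ?_, hsv⟩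
    rcases eq_or_ne v k with rfl | hvk
    · exact Set.mem_insert _ _
    · exact Set.mem_insert_of_mem _ (hK hvK hk.1 hvk)
  push Not at h
  obtain ⟨a, ha, b, hb, hab, hnab⟩ : ∃ a ∈ s, ∃ b ∈ s, a ≠ b ∧ ¬ G.Adj a b := by
    simpa [IsClique, Set.Pairwise] using hs
  refine ⟨a, ha, fun k hk => ?_, fun hsa => ?_⟩
  · rcases h k hk ha with rfl | hka
    · exact Set.mem_insert _ _
    · exact Set.mem_insert_of_mem _ hka.symm
  · rcases hsa hb with rfl | hab'
    exacts [hab rfl, hnab hab']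

def outerBoundary (G : SimpleGraph W) (s C : Set W) : Set W :=
  {x ∈ s | x ∉ C ∧ ∃ c ∈ C, G.Adj c x}

section Component

variable {s C : Set W} {v : W}
  (hC : Maximal (fun D => D ⊆ s \ insert v (G.neighborSet v) ∧ (G.induce D).Connected) C)
include hC

lemma outerBoundary_subset_neighborSet : G.outerBoundary s C ⊆ G.neighborSet v := by
  rintro x ⟨hxs, hxC, c, hcC, hcx⟩
  rcases eq_or_ne x v with rfl | hxv
  · exact absurd (Set.mem_insert_of_mem _ hcx.symm) (hC.1.1 hcC).2
  by_contra hxN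
  exact hxC (mem_of_maximal_connected_induce hC hcC ⟨hxs, fun h => h.elim hxv hxN⟩ hcx)

theorem _root_.IsChordal.isClique_outerBoundary (hG : IsChordal G) :
    G.IsClique (G.outerBoundary s C) := by
  intro x hxS y hyS hxy
  by_contra hnxy
  have hvx : G.Adj v x := outerBoundary_subset_neighborSet hC hxS
  have hvy : G.Adj v y := outerBoundary_subset_neighborSet hC hyS
  obtain ⟨-, -, cx, hcxC, hcx⟩ := hxS
  obtain ⟨-, -, cy, hcyC, hcy⟩ := hyS
  obtain ⟨p, hp, hch, hlen, hsupp⟩ :=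
    exists_isChordless_path_of_connected_induce hC.1.2 hxy hnxy hcxC hcyC hcx.symm hcy
  have hCv : ∀ z ∈ C, z ∉ insert v (G.neighborSet v) := fun z hz => (hC.1.1 hz).2
  have hvp : v ∉ p.support := fun hv => by
    rcases hsupp v hv with rfl | rfl | hvC
    exacts [hvx.ne rfl, hvy.ne rfl, hCv v hvC (Set.mem_insert _ _)]
  obtain ⟨z, hz, hzx, hzy, hvz⟩ := hG.exists_adj_of_isChordless_path hp hch hlen hvp hvx hvy
  exact hCv z ((hsupp z hz).resolve_left hzx |>.resolve_left hzy) (Set.mem_insert_of_mem _ hvz)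

end Component

theorem _root_.IsChordal.exists_isClique_neighborSet_inter_of_not_subset [Finite W]
    (hG : IsChordal G) (s : Set W) {K : Set W} (hK : G.IsClique K) (hsK : ¬ s ⊆ K) :
    ∃ c ∈ s, c ∉ K ∧ G.IsClique (G.neighborSet c ∩ s) := by
  induction s using WellFoundedLT.induction generalizing K with
  | _ s ih =>
    by_cases hs : G.IsClique s
    · obtain ⟨c, hcs, hcK⟩ := Set.not_subset.mp hsK
      exact ⟨c, hcs, hcK, hs.subset Set.inter_subset_right⟩
    obtain ⟨v, hvs, hKv, hsv⟩ := exists_inter_subset_insert_neighborSet_of_not_isClique hs hK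
    obtain ⟨c₀, hc₀s, hc₀v⟩ := Set.not_subset.mp hsv
    obtain ⟨C, hc₀C, hC⟩ := Finite.exists_le_maximal
      (p := fun D => D ⊆ s \ insert v (G.neighborSet v) ∧ (G.induce D).Connected)
      (a := {c₀}) ⟨Set.singleton_subset_iff.mpr ⟨hc₀s, hc₀v⟩, connected_induce_singleton c₀⟩
    have hlt : C ∪ G.outerBoundary s C ⊂ s := by
      refine (Set.ssubset_iff_of_subset (Set.union_subset (fun z hz => (hC.1.1 hz).1)
        (fun z hz => hz.1))).mpr ⟨v, hvs, ?_⟩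
      rintro (hvC | hvS)
      exacts [(hC.1.1 hvC).2 (Set.mem_insert _ _),
        G.loopless.irrefl v (outerBoundary_subset_neighborSet hC hvS)]
    obtain ⟨c, hc, hcS, hcl⟩ := ih _ hlt (hG.isClique_outerBoundary hC)
      (fun h => (h (Or.inl (hc₀C rfl))).2.1 (hc₀C rfl))
    have hcC : c ∈ C := hc.resolve_right hcS
    have hcT := hC.1.1 hcC
    refine ⟨c, hcT.1, fun hcK => hcT.2 (hKv ⟨hcK, hcT.1⟩), hcl.subset ?_⟩
    rintro z ⟨hcz, hzs⟩
    by_cases hzC : z ∈ C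
    · exact ⟨hcz, Or.inl hzC⟩
    · exact ⟨hcz, Or.inr ⟨hzs, hzC, c, hcC, hcz⟩⟩

end SimpleGraph

theorem chordal_has_simplicial_vertex (G : SimpleGraph V) [Nonempty V] (hG : IsChordal G) :
    ∃ v : V, IsSimplicialVtx G v := by
  obtain ⟨v, -, -, hv⟩ := hG.exists_isClique_neighborSet_inter_of_not_subset Set.univ
    SimpleGraph.isClique_empty (Set.univ_nonempty.not_subset_empty)
  exact ⟨v, fun x y hx hy hxy => hv ⟨hx, trivial⟩ ⟨hy, trivial⟩ hxy⟩
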